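/- Let K be a semiring and Σ = Σ_call ⊔ Σ_int ⊔ Σ_ret a visibly pushdown alphabet, and let M_VPL be the OPM for VPL. Then for every weighted nested word automaton A over Σ and K there exists a restricted weighted operator precedence automaton B over (Σ, M_VPL) and K such that ⟦A⟧(w) = ⟦B⟧(w) for all w ∈ (Σ, M_VPL)^+. -/

import Mathlib

namespace WOP

/-- Precedence relations: yields precedence, equal in precedence, takes precedence. -/
inductive PrecRel where
  | lt | eq | gt
deriving DecidableEq

/-- An operator precedence matrix on `Σ ∪ {#}`, where `none` encodes `#`.
It assigns at most one precedence relation to each ordered pair, with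
`# ⋖ a` and `a ⋗ #` for every letter `a`. -/
structure OPM (A : Type) where
  rel : Option A → Option A → Option PrecRel
  hash_lt : ∀ a : A, rel none (some a) = some .lt
  hash_gt : ∀ a : A, rel (some a) none = some .gt

variable {A B K : Type}

/-- The letter of `#w#` at position `i` (positions `0` and `> |w|` carry `#`, i.e. `none`). -/
def letterAt (w : List A) (i : ℕ) : Option A :=
  if i = 0 then none else w[i - 1]?

section ChainRel

variable (M : OPM A) (L : ℕ → Option A)

mutual
  /-- `ChainMid M L k j`: there are `k = k_s < ... < k_m = j` with
  `L k_s ≐ L k_{s+1} ≐ ... ≐ L k_{m-1} ⋗ L k_m` and the gap condition between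
  consecutive elements. -/
  inductive ChainMid : ℕ → ℕ → Prop where
    | last {k j : ℕ} : M.rel (L k) (L j) = some .gt → ChainGap k j → ChainMid k j
    | step {k k' j : ℕ} : M.rel (L k) (L k') = some .eq → ChainGap k k' →
        ChainMid k' j → ChainMid k j

  /-- The gap condition between consecutive elements of a chain:
  adjacent positions or a chain. -/
  inductive ChainGap : ℕ → ℕ → Prop where
    | adj (k : ℕ) : ChainGap k (k + 1)
    | chain {k k' : ℕ} : Chain k k' → ChainGap k k'

  /-- The chain relation `i ⤳ j`: there are positions `i = k_1 < ... < k_m = j` with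
  `L k_1 ⋖ L k_2 ≐ ... ≐ L k_{m-1} ⋗ L k_m` such that consecutive `k`'s are adjacent
  or themselves related by `⤳`. -/
  inductive Chain : ℕ → ℕ → Prop where
    | mk {i k j : ℕ} : M.rel (L i) (L k) = some .lt → ChainGap i k → ChainMid k j →
        Chain i j
end

end ChainRel

/-- `(Σ,M)^+`: the set of nonempty words compatible with `M`, i.e. `0 ⤳ |w|+1` in `#w#`. -/
def OPWords (M : OPM A) : Set (List A) :=
  {w | w ≠ [] ∧ Chain M (letterAt w) 0 (w.length + 1)}

/-- An (unweighted) operator precedence automaton over the alphabet `A`. -/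
structure OPA (A : Type) where
  Q : Type
  fin : Fintype Q
  I : Set Q
  F : Set Q
  δpush : Set (Q × A × Q)
  δshift : Set (Q × A × Q)
  δpop : Set (Q × Q × Q)

/-- A weighted operator precedence automaton over the alphabet `A` and weights in `K`. -/
structure WOPA (A K : Type) extends OPA A where
  wtpush : Q × A × Q → K
  wtshift : Q × A × Q → K
  wtpop : Q × Q × Q → K

/-- A configuration: a stack of (symbol, state) pairs, a current state,
and the remaining input. -/
structure Config (A Q : Type) where
  stack : List (A × Q)
  state : Q
  input : List A

/-- The moves (transitions) an OPA may take. -/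
inductive Move (A Q : Type) where
  | push (q : Q) (b : A) (r : Q)
  | shift (q : Q) (b : A) (r : Q)
  | pop (q p r : Q)

/-- The topmost stack symbol (`none` = `#` for the empty stack). -/
def topSym {Q : Type} (st : List (A × Q)) : Option A := st.head?.map Prod.fst

/-- One step of an OPA on an OP alphabet `(A, M)`. -/
inductive Exec (M : OPM A) (T : OPA A) : Config A T.Q → Move A T.Q → Config A T.Q → Prop where
  | push {st : List (A × T.Q)} {q r : T.Q} {b : A} {x : List A} :
      M.rel (topSym st) (some b) = some .lt → (q, b, r) ∈ T.δpush →
      Exec M T ⟨st, q, b :: x⟩ (.push q b r) ⟨(b, q) :: st, r, x⟩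
  | shift {st : List (A × T.Q)} {p q r : T.Q} {a b : A} {x : List A} :
      M.rel (some a) (some b) = some .eq → (q, b, r) ∈ T.δshift →
      Exec M T ⟨(a, p) :: st, q, b :: x⟩ (.shift q b r) ⟨(b, p) :: st, r, x⟩
  | pop {st : List (A × T.Q)} {p q r : T.Q} {a : A} {x : List A} :
      M.rel (some a) x.head? = some .gt → (q, p, r) ∈ T.δpop →
      Exec M T ⟨(a, p) :: st, q, x⟩ (.pop q p r) ⟨st, r, x⟩

/-- Execution of a sequence of moves. -/
inductive ExecList (M : OPM A) (T : OPA A) :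
    Config A T.Q → List (Move A T.Q) → Config A T.Q → Prop where
  | nil (c : Config A T.Q) : ExecList M T c [] c
  | cons {c c' c'' : Config A T.Q} {m : Move A T.Q} {ms : List (Move A T.Q)} :
      Exec M T c m c' → ExecList M T c' ms c'' → ExecList M T c (m :: ms) c''

/-- The weight of a move of a weighted OPA. -/
def moveWt [Semiring K] (W : WOPA A K) : Move A W.Q → K
  | .push q b r => W.wtpush (q, b, r)
  | .shift q b r => W.wtshift (q, b, r)
  | .pop q p r => W.wtpop (q, p, r)

/-- The accepting runs of an OPA on `w`: an initial state, a sequence of moves from the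
initial configuration (empty stack, whole input) to a final configuration
(empty stack, input read), and the final state reached. -/
def AccRuns (M : OPM A) (T : OPA A) (w : List A) : Set (T.Q × List (Move A T.Q) × T.Q) :=
  {ρ | ρ.1 ∈ T.I ∧ ρ.2.2 ∈ T.F ∧ ExecList M T ⟨[], ρ.1, w⟩ ρ.2.1 ⟨[], ρ.2.2, []⟩}

/-- The behavior `⟦W⟧(w)`: the sum over all accepting runs of `W` on `w` of the product
(in order) of the weights of the moves of the run. -/
noncomputable def behavior [Semiring K] (M : OPM A) (W : WOPA A K) (w : List A) : K :=
  ∑ᶠ ρ ∈ AccRuns M W.toOPA w, (ρ.2.1.map (moveWt W)).prod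

/-- A weighted OPA is restricted (an rwOPA) if all pop weights are `1`. -/
def Restricted [Semiring K] (W : WOPA A K) : Prop := ∀ t ∈ W.δpop, W.wtpop t = 1

/-- A series `S : (Σ,M)^+ → K` is regular if it is the behavior of some wOPA. -/
def Regular [Semiring K] (M : OPM A) (S : List A → K) : Prop :=
  ∃ W : WOPA A K, ∀ w ∈ OPWords M, S w = behavior M W w

/-- A series is strictly regular if it is the behavior of some restricted wOPA. -/
def StrictlyRegular [Semiring K] (M : OPM A) (S : List A → K) : Prop :=
  ∃ W : WOPA A K, Restricted W ∧ ∀ w ∈ OPWords M, S w = behavior M W w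

/-- Unweighted acceptance. -/
def Accepts (M : OPM A) (T : OPA A) (w : List A) : Prop :=
  ∃ qI ms qF, qI ∈ T.I ∧ qF ∈ T.F ∧ ExecList M T ⟨[], qI, w⟩ ms ⟨[], qF, []⟩

/-- A language `L ⊆ (Σ,M)^+` is an operator precedence language if it is the set of
compatible words accepted by some OPA. -/
def IsOPL (M : OPM A) (L : Set (List A)) : Prop :=
  ∃ T : OPA A, L = {w | w ∈ OPWords M ∧ Accepts M T w}

/-- The intersection `S ∩ L` of a series with a language. -/
noncomputable def interSeries [Semiring K] (S : List A → K) (L : Set (List A))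
    (w : List A) : K :=
  open Classical in if w ∈ L then S w else 0

/-- `h : Σ → Γ` is OPM-preserving: `a ⊙ b` iff `h(a) ⊙ h(b)` for every relation `⊙`. -/
def OPMPreserving (M : OPM A) (M' : OPM B) (h : A → B) : Prop :=
  ∀ a b : A, M.rel (some a) (some b) = M'.rel (some (h a)) (some (h b))

/-- The image series `h(S)(v) = ∑_{w ∈ (Σ,M)^+, h(w) = v} S(w)`. -/
noncomputable def mapSeries [Semiring K] (M : OPM A) (h : A → B) (S : List A → K)
    (v : List B) : K :=
  ∑ᶠ w ∈ {w | w ∈ OPWords M ∧ w.map h = v}, S w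

/-- The pullback OPM `h⁻¹(M)` along `h : Σ' → Σ`. -/
def pullOPM (M : OPM A) (h : B → A) : OPM B where
  rel o₁ o₂ := M.rel (o₁.map h) (o₂.map h)
  hash_lt b := M.hash_lt (h b)
  hash_gt b := M.hash_gt (h b)

/-- The Nivat class `N(Σ,M,K)`: series obtained from a one-state restricted wOPA over a
pulled-back OP alphabet, intersected with an OPL, followed by the projection. -/
def NivatClass [Semiring K] (M : OPM A) (S : List A → K) : Prop :=
  ∃ (B : Type) (_ : Fintype B) (h : B → A) (W : WOPA B K) (L : Set (List B)),
    Restricted W ∧ (∃ q₀ : W.Q, ∀ q : W.Q, q = q₀) ∧ IsOPL (pullOPM M h) L ∧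
    ∀ v ∈ OPWords M,
      S v = mapSeries (pullOPM M h) h (interSeries (behavior (pullOPM M h) W) L) v

/-- An OPL step function: a finite sum `∑ kᵢ · 1_{Lᵢ}` with the `Lᵢ` OPLs forming a
partition of `(Σ,M)^+`. -/
def IsOPLStep [Semiring K] (M : OPM A) (S : List A → K) : Prop :=
  ∃ (n : ℕ) (k : Fin n → K) (L : Fin n → Set (List A)),
    (∀ i, IsOPL M (L i)) ∧ (∀ i j, i ≠ j → Disjoint (L i) (L j)) ∧
    (⋃ i, L i) = OPWords M ∧ ∀ i, ∀ w ∈ L i, S w = k i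



/-- The kind of a symbol of a visibly pushdown alphabet. -/
inductive VKind where
  | call | int | ret
deriving DecidableEq

/-- A weighted nested word automaton over a visibly pushdown alphabet `A`. -/
structure WNWA (A K : Type) where
  Q : Type
  fin : Fintype Q
  I : Set Q
  F : Set Q
  δcall : Set (Q × A × Q)
  δint : Set (Q × A × Q)
  δret : Set (Q × Q × A × Q)
  wtcall : Q × A × Q → K
  wtint : Q × A × Q → K
  wtret : Q × Q × A × Q → K

/-- A configuration of a nested word automaton. -/
structure NConfig (A Q : Type) where
  stack : List Q
  state : Q
  input : List A

/-- The moves of a nested word automaton. -/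
inductive NMove (A Q : Type) where
  | call (q : Q) (a : A) (r : Q)
  | int (q : Q) (a : A) (r : Q)
  | ret (q p : Q) (a : A) (r : Q)

variable {A K : Type}

/-- One step of a wNWA: reading a call pushes the source state, reading an internal
leaves the stack unchanged, reading a return pops the topmost pushed state. -/
inductive NExec (kind : A → VKind) (T : WNWA A K) :
    NConfig A T.Q → NMove A T.Q → NConfig A T.Q → Prop where
  | call {st : List T.Q} {q r : T.Q} {a : A} {x : List A} :
      kind a = .call → (q, a, r) ∈ T.δcall →
      NExec kind T ⟨st, q, a :: x⟩ (.call q a r) ⟨q :: st, r, x⟩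
  | int {st : List T.Q} {q r : T.Q} {a : A} {x : List A} :
      kind a = .int → (q, a, r) ∈ T.δint →
      NExec kind T ⟨st, q, a :: x⟩ (.int q a r) ⟨st, r, x⟩
  | ret {st : List T.Q} {p q r : T.Q} {a : A} {x : List A} :
      kind a = .ret → (q, p, a, r) ∈ T.δret →
      NExec kind T ⟨p :: st, q, a :: x⟩ (.ret q p a r) ⟨st, r, x⟩

/-- Execution of a sequence of moves of a wNWA. -/
inductive NExecList (kind : A → VKind) (T : WNWA A K) :
    NConfig A T.Q → List (NMove A T.Q) → NConfig A T.Q → Prop where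
  | nil (c : NConfig A T.Q) : NExecList kind T c [] c
  | cons {c c' c'' : NConfig A T.Q} {m : NMove A T.Q} {ms : List (NMove A T.Q)} :
      NExec kind T c m c' → NExecList kind T c' ms c'' → NExecList kind T c (m :: ms) c''

/-- The weight of a move of a wNWA. -/
def nMoveWt [Semiring K] (T : WNWA A K) : NMove A T.Q → K
  | .call q a r => T.wtcall (q, a, r)
  | .int q a r => T.wtint (q, a, r)
  | .ret q p a r => T.wtret (q, p, a, r)

/-- Accepting runs of a wNWA on `w`: from an initial state with empty stack to a
final state with empty stack, reading all of `w`. -/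
def NAccRuns (kind : A → VKind) (T : WNWA A K) (w : List A) :
    Set (T.Q × List (NMove A T.Q) × T.Q) :=
  {ρ | ρ.1 ∈ T.I ∧ ρ.2.2 ∈ T.F ∧ NExecList kind T ⟨[], ρ.1, w⟩ ρ.2.1 ⟨[], ρ.2.2, []⟩}

/-- The behavior of a wNWA: the sum over all accepting runs of the ordered product of
the weights of its transitions. -/
noncomputable def nBehavior [Semiring K] (kind : A → VKind) (T : WNWA A K)
    (w : List A) : K :=
  ∑ᶠ ρ ∈ NAccRuns kind T w, (ρ.2.1.map (nMoveWt T)).prod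

/-- The OPM `M_VPL` for visibly pushdown languages: calls yield precedence to calls and
internals, calls are equal in precedence to returns, and returns and internals take
precedence over everything. -/
def vplOPM (kind : A → VKind) : OPM A where
  rel o₁ o₂ :=
    match o₁, o₂ with
    | none, none => none
    | none, some _ => some .lt
    | some _, none => some .gt
    | some a, some b =>
      match kind a, kind b with
      | .call, .call => some .lt
      | .call, .int => some .lt
      | .call, .ret => some .eq
      | _, _ => some .gt
  hash_lt _ := rfl
  hash_gt _ := rfl

/-!
Under `M_VPL` a call letter is pushed, an internal letter is pushed and popped at once, and a
return letter is shifted onto the stack entry of its matching call and then popped. So an OPA can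
mimic a nested word automaton move by move: the stack entry of a call stores the NWA state pushed
there, the weight of each NWA transition goes on the push or shift reading its letter, and every
pop has weight `1`. Accepting runs of the two automata then correspond bijectively, with equal
weights.
-/

section Simulation

variable {A K : Type}

theorem ExecList.append {M : OPM A} {T : OPA A} {c c' c'' : Config A T.Q}
    {l l' : List (Move A T.Q)} (h : ExecList M T c l c') (h' : ExecList M T c' l' c'') :
    ExecList M T c (l ++ l') c'' := by
  induction h with
  | nil => exact h'
  | cons hstep _ ih => exact .cons hstep (ih h')

/-- `afterInt r` and `afterRet p r` are the states between the two moves simulating an internal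
or a return letter; they remember the target `r` of the NWA transition and, for a return, the
popped NWA state `p`, which the OPA's pop checks against the state stored with the call. -/
inductive SimState (Q : Type) where
  | main (q : Q)
  | afterInt (r : Q)
  | afterRet (p r : Q)
deriving Fintype

variable (kind : A → VKind)

theorem vplOPM_rel_gt {a : A} (ha : kind a ≠ .call) (o : Option A) :
    (vplOPM kind).rel (some a) o = some .gt := by
  cases o with
  | none => rfl
  | some b => cases hka : kind a <;> cases kind b <;> simp_all [vplOPM]

theorem vplOPM_rel_eq {a b : A} (ha : kind a = .call) (hb : kind b = .ret) :
    (vplOPM kind).rel (some a) (some b) = some .eq := by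
  simp [vplOPM, ha, hb]

variable (W : WNWA A K)

inductive SimPush : SimState W.Q × A × SimState W.Q → Prop where
  | call {q a r} : (q, a, r) ∈ W.δcall → kind a = .call → SimPush (.main q, a, .main r)
  | int {q a r} : (q, a, r) ∈ W.δint → kind a = .int → SimPush (.main q, a, .afterInt r)

inductive SimShift : SimState W.Q × A × SimState W.Q → Prop where
  | ret {q p a r} : (q, p, a, r) ∈ W.δret → kind a = .ret →
      SimShift (.main q, a, .afterRet p r)

inductive SimPop : SimState W.Q × SimState W.Q × SimState W.Q → Prop where
  | int (p : SimState W.Q) (r : W.Q) : SimPop (.afterInt r, p, .main r)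
  | ret (p r : W.Q) : SimPop (.afterRet p r, .main p, .main r)

abbrev WNWA.toWOPA [Semiring K] : WOPA A K where
  Q := SimState W.Q
  fin := letI := W.fin; inferInstance
  I := .main '' W.I
  F := .main '' W.F
  δpush := {t | SimPush kind W t}
  δshift := {t | SimShift kind W t}
  δpop := {t | SimPop W t}
  wtpush
    | (.main q, a, .main r) => W.wtcall (q, a, r)
    | (.main q, a, .afterInt r) => W.wtint (q, a, r)
    | _ => 1
  wtshift
    | (.main q, a, .afterRet p r) => W.wtret (q, p, a, r)
    | _ => 1
  wtpop _ := 1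

theorem WNWA.toWOPA_restricted [Semiring K] : Restricted (W.toWOPA kind) := fun _ _ => rfl

def simMoves : NMove A W.Q → List (Move A (SimState W.Q))
  | .call q a r => [.push (.main q) a (.main r)]
  | .int q a r => [.push (.main q) a (.afterInt r), .pop (.afterInt r) (.main q) (.main r)]
  | .ret q p a r =>
      [.shift (.main q) a (.afterRet p r), .pop (.afterRet p r) (.main p) (.main r)]

variable {W}

theorem simMoves_ne_nil (m : NMove A W.Q) : simMoves W m ≠ [] := by
  cases m <;> simp [simMoves]

theorem simMoves_append_inj {m m' : NMove A W.Q} {l l' : List (Move A (SimState W.Q))}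
    (h : simMoves W m ++ l = simMoves W m' ++ l') : m = m' ∧ l = l' := by
  cases m <;> cases m' <;> simp_all [simMoves]

theorem flatMap_simMoves_injective :
    Function.Injective fun ms : List (NMove A W.Q) => ms.flatMap (simMoves W) := by
  intro ms ms' h
  induction ms generalizing ms' with
  | nil => cases ms' with
    | nil => rfl
    | cons m' _ => simp [simMoves_ne_nil] at h
  | cons m ms ih => cases ms' with
    | nil => simp [simMoves_ne_nil] at h
    | cons m' ms' =>
      obtain ⟨rfl, h'⟩ := simMoves_append_inj (by simpa using h)
      rw [ih h']

theorem prod_map_moveWt_simMoves [Semiring K] (m : NMove A W.Q) :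
    ((simMoves W m).map (moveWt (W.toWOPA kind))).prod = nMoveWt W m := by
  cases m <;> simp [simMoves, moveWt, WNWA.toWOPA, nMoveWt]

theorem prod_map_moveWt_flatMap_simMoves [Semiring K] (ms : List (NMove A W.Q)) :
    ((ms.flatMap (simMoves W)).map (moveWt (W.toWOPA kind))).prod = (ms.map (nMoveWt W)).prod := by
  induction ms with
  | nil => rfl
  | cons m ms ih =>
    rw [List.flatMap_cons, List.map_append, List.prod_append, prod_map_moveWt_simMoves, ih,
      List.map_cons, List.prod_cons]

variable (W) in
inductive StackRel : List W.Q → List (A × SimState W.Q) → Prop where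
  | nil : StackRel [] []
  | cons {st P} {a : A} (q : W.Q) : kind a = .call → StackRel st P →
      StackRel (q :: st) ((a, .main q) :: P)

variable {kind}

theorem StackRel.rel_topSym {st : List W.Q} {P : List (A × SimState W.Q)}
    (h : StackRel kind W st P) {b : A} (hb : kind b ≠ .ret) :
    (vplOPM kind).rel (topSym P) (some b) = some .lt := by
  cases h with
  | nil => rfl
  | cons q ha _ => cases hkb : kind b <;> simp_all [topSym, vplOPM]

variable [Semiring K]

theorem NExec.simulate {st st' : List W.Q} {q q' : W.Q} {w w' : List A} {m : NMove A W.Q}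
    (h : NExec kind W ⟨st, q, w⟩ m ⟨st', q', w'⟩) {P : List (A × SimState W.Q)}
    (hP : StackRel kind W st P) : ∃ P', StackRel kind W st' P' ∧
      ExecList (vplOPM kind) (W.toWOPA kind).toOPA ⟨P, .main q, w⟩ (simMoves W m)
        ⟨P', .main q', w'⟩ := by
  cases h with
  | call hk hδ =>
    exact ⟨_, .cons q hk hP,
      .cons (.push (hP.rel_topSym (by simp [hk])) (SimPush.call hδ hk)) (.nil _)⟩
  | int hk hδ =>
    exact ⟨P, hP, .cons (.push (hP.rel_topSym (by simp [hk])) (SimPush.int hδ hk))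
      (.cons (.pop (vplOPM_rel_gt kind (by simp [hk]) _) (SimPop.int _ _)) (.nil _))⟩
  | ret hk hδ =>
    obtain _ | ⟨_, hcall, hP'⟩ := hP
    exact ⟨_, hP', .cons (.shift (vplOPM_rel_eq kind hcall hk) (SimShift.ret hδ hk))
      (.cons (.pop (vplOPM_rel_gt kind (by simp [hk]) _) (SimPop.ret _ _)) (.nil _))⟩

theorem NExecList.simulate {c c' : NConfig A W.Q} {ms : List (NMove A W.Q)}
    (h : NExecList kind W c ms c') {P : List (A × SimState W.Q)}
    (hP : StackRel kind W c.stack P) : ∃ P', StackRel kind W c'.stack P' ∧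
      ExecList (vplOPM kind) (W.toWOPA kind).toOPA ⟨P, .main c.state, c.input⟩
        (ms.flatMap (simMoves W)) ⟨P', .main c'.state, c'.input⟩ := by
  induction h generalizing P with
  | nil => exact ⟨P, hP, .nil _⟩
  | cons hstep _ ih =>
    obtain ⟨P₁, hP₁, hrun₁⟩ := hstep.simulate hP
    obtain ⟨P₂, hP₂, hrun₂⟩ := ih hP₁
    exact ⟨P₂, hP₂, hrun₁.append hrun₂⟩

theorem ExecList.exists_nExec {st : List W.Q} {P Pf : List (A × SimState W.Q)} {q qf : W.Q}
    {w wf : List A} {ms : List (Move A (SimState W.Q))} (hP : StackRel kind W st P)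
    (hrun : ExecList (vplOPM kind) (W.toWOPA kind).toOPA ⟨P, .main q, w⟩ ms
      ⟨Pf, .main qf, wf⟩)
    (hms : ms ≠ []) :
    ∃ (m : NMove A W.Q) (rest : List (Move A (SimState W.Q))) (st' : List W.Q)
      (P' : List (A × SimState W.Q)) (q' : W.Q) (w' : List A),
      ms = simMoves W m ++ rest ∧ NExec kind W ⟨st, q, w⟩ m ⟨st', q', w'⟩ ∧
      StackRel kind W st' P' ∧
      ExecList (vplOPM kind) (W.toWOPA kind).toOPA ⟨P', .main q', w'⟩ rest
        ⟨Pf, .main qf, wf⟩ := by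
  obtain _ | ⟨hstep, hrest⟩ := hrun
  · exact absurd rfl hms
  cases hstep with
  | push _ hδ =>
    cases hδ with
    | call hδ hk => exact ⟨_, _, _, _, _, _, rfl, .call hk hδ, .cons _ hk hP, hrest⟩
    | int hδ hk =>
      obtain _ | ⟨hstep, hrest⟩ := hrest
      cases hstep with
      | push _ hδ' => cases hδ'
      | shift _ hδ' => cases hδ'
      | pop _ hδ' =>
        cases hδ'
        exact ⟨_, _, _, _, _, _, rfl, .int hk hδ, hP, hrest⟩
  | shift _ hδ =>
    cases hδ with
    | ret hδ hk =>
      obtain _ | ⟨_, _, hP'⟩ := hP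
      obtain _ | ⟨hstep, hrest⟩ := hrest
      cases hstep with
      | push _ hδ' => cases hδ'
      | shift _ hδ' => cases hδ'
      | pop _ hδ' =>
        cases hδ'
        exact ⟨_, _, _, _, _, _, rfl, .ret hk hδ, hP', hrest⟩
  | pop _ hδ => cases hδ

theorem ExecList.exists_nExecList {st : List W.Q} {P : List (A × SimState W.Q)} {q qf : W.Q}
    {w : List A} {ms : List (Move A (SimState W.Q))} (hP : StackRel kind W st P)
    (hrun : ExecList (vplOPM kind) (W.toWOPA kind).toOPA ⟨P, .main q, w⟩ ms
      ⟨[], .main qf, []⟩) :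
    ∃ nms : List (NMove A W.Q), ms = nms.flatMap (simMoves W) ∧
      NExecList kind W ⟨st, q, w⟩ nms ⟨[], qf, []⟩ := by
  rcases eq_or_ne ms [] with rfl | hms
  · cases hrun
    cases hP
    exact ⟨[], rfl, .nil _⟩
  obtain ⟨m, rest, st', P', q', w', rfl, hstep, hP', hrest⟩ := hrun.exists_nExec hP hms
  have : rest.length < (simMoves W m ++ rest).length := by
    simpa [List.length_pos_iff] using simMoves_ne_nil m
  obtain ⟨nms, rfl, hnrun⟩ := hrest.exists_nExecList hP'
  exact ⟨m :: nms, rfl, .cons hstep hnrun⟩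
termination_by ms.length

variable (kind W) in
theorem bijOn_nAccRuns_accRuns (w : List A) :
    Set.BijOn (fun ρ => (SimState.main ρ.1, ρ.2.1.flatMap (simMoves W), SimState.main ρ.2.2))
      (NAccRuns kind W w) (AccRuns (vplOPM kind) (W.toWOPA kind).toOPA w) := by
  refine ⟨?_, ?_, ?_⟩
  · rintro ⟨qI, ms, qF⟩ ⟨hI, hF, hrun⟩
    obtain ⟨P, hP, hrun'⟩ := hrun.simulate .nil
    cases hP
    exact ⟨⟨qI, hI, rfl⟩, ⟨qF, hF, rfl⟩, hrun'⟩
  · rintro ⟨qI, ms, qF⟩ - ⟨qI', ms', qF'⟩ - h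
    simp only [Prod.mk.injEq, SimState.main.injEq] at h
    obtain ⟨rfl, hms, rfl⟩ := h
    rw [flatMap_simMoves_injective hms]
  · rintro ⟨_, ms, _⟩ ⟨⟨qI, hI, rfl⟩, ⟨qF, hF, rfl⟩, hrun⟩
    obtain ⟨nms, rfl, hnrun⟩ := hrun.exists_nExecList .nil
    exact ⟨(qI, nms, qF), ⟨hI, hF, hnrun⟩, rfl⟩

end Simulation

/-- For every weighted nested word automaton over a visibly pushdown alphabet there is a
restricted weighted OPA over the OPM `M_VPL` with the same behavior on `(Σ, M_VPL)^+`. -/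
theorem wNWA_to_rwOPA [Fintype A] [Semiring K] (kind : A → VKind) (W : WNWA A K) :
    ∃ B : WOPA A K, Restricted B ∧
      ∀ w ∈ OPWords (vplOPM kind), nBehavior kind W w = behavior (vplOPM kind) B w :=
  ⟨W.toWOPA kind, W.toWOPA_restricted kind, fun w _ =>
    finsum_mem_eq_of_bijOn _ (bijOn_nAccRuns_accRuns kind W w)
      fun ρ _ => (prod_map_moveWt_flatMap_simMoves kind ρ.2.1).symm⟩

end WOP
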